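/- Let Γ be a bipartite distance-regular graph with diameter D ≥ 4, valency k ≥ 3. Then for 1 ≤ i ≤ D-1, the identity p_{i+1}(λ) p_{i-1}(μ) − p_{i-1}(λ) p_{i+1}(μ) = c_i^{-1} c_{i+1}^{-1} (λ² − μ²) Ψ_{i-1}(λ,μ) holds in ℝ[λ,μ]. -/

import Mathlib

open Polynomial Finset Matrix

noncomputable section

attribute [local instance] Classical.propDecidable

/-- A bipartite distance-regular graph with diameter `D ≥ 4` and valency `k ≥ 3`:
a finite connected simple graph such that for all `h,i,j ≤ D` and all vertices `x,y`
at distance `h`, the number of vertices `z` with `∂(x,z) = i` and `∂(z,y) = j`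
is the constant `p h i j`, and `p h i j = 0` whenever `h + i + j` is odd. -/
structure BDRG (α : Type) [Fintype α] [DecidableEq α] where
  G : SimpleGraph α
  hconn : G.Connected
  D : ℕ
  hD : 4 ≤ D
  hdist : ∀ x y : α, G.dist x y ≤ D
  hdiam : ∃ x y : α, G.dist x y = D
  p : ℕ → ℕ → ℕ → ℕ
  hp : ∀ h i j : ℕ, h ≤ D → i ≤ D → j ≤ D → ∀ x y : α, G.dist x y = h →
      Nat.card {z : α // G.dist x z = i ∧ G.dist z y = j} = p h i j
  hbip : ∀ h i j : ℕ, h ≤ D → i ≤ D → j ≤ D → Odd (h + i + j) → p h i j = 0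
  hk : 3 ≤ p 0 1 1

namespace BDRG

variable {α : Type} [Fintype α] [DecidableEq α] (Γ : BDRG α)

/-- The intersection number `c_i = p^i_{1,i-1}` (with `c_0 = 0`), as a real number. -/
def c (i : ℕ) : ℝ := if i = 0 then 0 else (Γ.p i 1 (i - 1) : ℝ)

/-- The intersection number `b_i = p^i_{1,i+1}` (with `b_D = 0`), as a real number. -/
def b (i : ℕ) : ℝ := if i = Γ.D then 0 else (Γ.p i 1 (i + 1) : ℝ)

/-- The valency `k = b_0`. -/
def k : ℝ := Γ.b 0

/-- The `i`-th valency `k_i = p^0_{ii}`, as a real number. -/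
def kv (i : ℕ) : ℝ := (Γ.p 0 i i : ℝ)

/-- The polynomials `f_i` defined by `f_0 = 1`, `f_1 = λ` and
`λ f_i = b_{i-1} f_{i-1} + c_{i+1} f_{i+1}`. -/
def f : ℕ → Polynomial ℝ
  | 0 => 1
  | 1 => Polynomial.X
  | (i + 2) => Polynomial.C (Γ.c (i + 2))⁻¹ *
      (Polynomial.X * f (i + 1) - Polynomial.C (Γ.b i) * f i)

/-- The polynomials `p_i = Σ_{h ≤ i, i-h even} f_h`. -/
def pp (i : ℕ) : Polynomial ℝ :=
  ∑ h ∈ Finset.range (i + 1), if (i - h) % 2 = 0 then Γ.f h else 0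

/-- The `i`-th distance matrix of `Γ`, over `ℂ`. -/
def Amat (i : ℕ) : Matrix α α ℂ :=
  Matrix.of fun y z => if Γ.G.dist y z = i then 1 else 0

/-- The all-ones matrix. -/
def Jmat (α : Type) [Fintype α] : Matrix α α ℂ := Matrix.of fun _ _ => (1 : ℂ)

/-- `θ 0 > θ 1 > ⋯ > θ D` are the distinct eigenvalues of the adjacency matrix,
with `θ 0 = k`. -/
def IsEigenvalueSeq (θ : ℕ → ℝ) : Prop :=
  θ 0 = Γ.k ∧
  (∀ i j : ℕ, i < j → j ≤ Γ.D → θ j < θ i) ∧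
  (∀ i ≤ Γ.D, Module.End.HasEigenvalue (Matrix.mulVecLin (Γ.Amat 1)) ((θ i : ℂ))) ∧
  (∀ μ : ℂ, Module.End.HasEigenvalue (Matrix.mulVecLin (Γ.Amat 1)) μ →
    ∃ i ≤ Γ.D, μ = ((θ i : ℝ) : ℂ))

/-- The multiplicity of the eigenvalue `t`: the dimension of the corresponding
eigenspace of the adjacency matrix. -/
def m (t : ℝ) : ℕ :=
  Module.finrank ℂ (Module.End.eigenspace (Matrix.mulVecLin (Γ.Amat 1)) (t : ℂ))

/-- `E` is the primitive idempotent for the eigenvalue `t`: the orthogonal projection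
onto the `t`-eigenspace of the adjacency matrix. -/
def IsPrimitiveIdempotent (t : ℝ) (E : Matrix α α ℂ) : Prop :=
  Eᴴ = E ∧ E * E = E ∧
  ∀ v : α → ℂ, (Γ.Amat 1).mulVec v = (t : ℂ) • v ↔ E.mulVec v = v

/-- `θs` is the dual eigenvalue sequence of the matrix `E`, i.e.
`E = |X|⁻¹ Σ_{i=0}^{D} θs i • A_i`. -/
def IsDualEigSeq (E : Matrix α α ℂ) (θs : ℕ → ℝ) : Prop :=
  E = (Fintype.card α : ℂ)⁻¹ • ∑ i ∈ Finset.range (Γ.D + 1), ((θs i : ℝ) : ℂ) • Γ.Amat i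

/-- The two-variable polynomial `Ψ_i`, as a function of two real variables. -/
def Psi (i : ℕ) (lam mu : ℝ) : ℝ :=
  ∑ h ∈ Finset.range (i + 1), if (i - h) % 2 = 0 then
    (Γ.pp h).eval lam * (Γ.pp h).eval mu *
      (Γ.kv i * Γ.b i * Γ.b (i + 1)) / (Γ.kv h * Γ.b h * Γ.b (h + 1))
  else 0

/-- The index `n` is admissible: `θ_n` is one of `θ_1, θ_d, θ_{d+1}, θ_{D-1}` if `D` is
odd (`d = (D-1)/2`), and one of `θ_1, θ_{D-1}` if `D` is even. -/
def Admissible (n : ℕ) : Prop :=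
  (Odd Γ.D ∧ (n = 1 ∨ n = Γ.D / 2 ∨ n = Γ.D / 2 + 1 ∨ n = Γ.D - 1)) ∨
  (Even Γ.D ∧ (n = 1 ∨ n = Γ.D - 1))

/-- The polynomials `g_i` associated with the scalar `t`. -/
def g (t : ℝ) (i : ℕ) : Polynomial ℝ :=
  ∑ h ∈ Finset.range (i + 1), if (i - h) % 2 = 0 then
    Polynomial.C ((Γ.pp h).eval t * (Γ.kv i * Γ.b i * Γ.b (i + 1)) /
        ((Γ.pp i).eval t * (Γ.kv h * Γ.b h * Γ.b (h + 1)))) * Γ.pp h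
  else 0

/-- The dual idempotent `E_i* = E_i*(x)`. -/
def Estar (x : α) (i : ℕ) : Matrix α α ℂ :=
  Matrix.of fun y z => if y = z ∧ Γ.G.dist x y = i then 1 else 0

/-- The Hermitian inner product `⟨u,v⟩ = uᵗ v̄` on the standard module `ℂ^X`. -/
def dotp {α : Type} [Fintype α] (u v : α → ℂ) : ℂ := ∑ y, u y * (starRingEnd ℂ) (v y)

/-- The square norm `‖v‖²` with respect to the Hermitian inner product. -/
def nrmsq {α : Type} [Fintype α] (v : α → ℂ) : ℝ := ∑ y, Complex.normSq (v y)

/-- The vector `s_2 = Σ_{∂(x,y)=2} ŷ`. -/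
def s2vec (x : α) : α → ℂ := fun y => if Γ.G.dist x y = 2 then 1 else 0

/-- The scalar `ψ = b_2 (1 - b_3/(1+η))`. -/
def psi (η : ℝ) : ℝ := Γ.b 2 * (1 - Γ.b 3 / (1 + η))

/-- The scalar `θ̃ = -1 - b_2 b_3/(t² - b_2)`. -/
def tilde (t : ℝ) : ℝ := -1 - Γ.b 2 * Γ.b 3 / (t ^ 2 - Γ.b 2)

/-- The adjacency matrix of the local graph `Γ₂² = Γ₂²(x)`, whose vertices are the
vertices at distance 2 from `x`, adjacent when at distance 2 in `Γ`. -/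
def localAdj (x : α) :
    Matrix {y : α // Γ.G.dist x y = 2} {y : α // Γ.G.dist x y = 2} ℂ :=
  Matrix.of fun y z => if Γ.G.dist (y : α) (z : α) = 2 then 1 else 0

/-- `η 1, …, η k₂` enumerate the eigenvalues of the local graph `Γ₂²(x)` with their
multiplicities, ordered so that `η 1 = p²₂₂` and `η i = b₃ - 1` for `2 ≤ i ≤ k`. -/
def IsLocalEigSeq (x : α) (η : ℕ → ℝ) : Prop :=
  η 1 = (Γ.p 2 2 2 : ℝ) ∧
  (∀ i : ℕ, 2 ≤ i → i ≤ Γ.p 0 1 1 → η i = Γ.b 3 - 1) ∧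
  ∀ t : ℝ, Nat.card {i : ℕ // i ∈ Finset.Icc 1 (Γ.p 0 2 2) ∧ η i = t} =
    Module.finrank ℂ (Module.End.eigenspace (Matrix.mulVecLin (Γ.localAdj x)) (t : ℂ))

/-- The subconstituent (Terwilliger) algebra `T = T(x)`, generated by the adjacency
matrix together with the dual idempotents `E_0*, …, E_D*`. -/
def Talg (x : α) : Subalgebra ℂ (Matrix α α ℂ) :=
  Algebra.adjoin ℂ ({Γ.Amat 1} ∪ Set.range (Γ.Estar x))

/-- A `T`-module: a `T`-invariant subspace of the standard module `ℂ^X`. -/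
def IsTModule (x : α) (W : Submodule ℂ (α → ℂ)) : Prop :=
  ∀ B ∈ Γ.Talg x, ∀ w ∈ W, B.mulVec w ∈ W

/-- An irreducible `T`-module. -/
def IsIrreducibleTModule (x : α) (W : Submodule ℂ (α → ℂ)) : Prop :=
  W ≠ ⊥ ∧ Γ.IsTModule x W ∧
    ∀ W' : Submodule ℂ (α → ℂ), W' ≤ W → Γ.IsTModule x W' → W' = ⊥ ∨ W' = W

/-- The endpoint of a `T`-module `W` is `min {i : E_i* W ≠ 0}`. -/
def HasEndpoint (x : α) (W : Submodule ℂ (α → ℂ)) (e : ℕ) : Prop :=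
  (∃ w ∈ W, (Γ.Estar x e).mulVec w ≠ 0) ∧
  ∀ i : ℕ, i < e → ∀ w ∈ W, (Γ.Estar x i).mulVec w = 0

/-- A `T`-module `W` is thin whenever `dim E_i* W ≤ 1` for all `i`. -/
def IsThin (x : α) (W : Submodule ℂ (α → ℂ)) : Prop :=
  ∀ i : ℕ, Module.finrank ℂ (W.map (Matrix.mulVecLin (Γ.Estar x i))) ≤ 1

/-- `W` has local eigenvalue `η`: every vector of `E_2* W` is an eigenvector of
`E_2* A_2 E_2*` with eigenvalue `η`. -/
def HasLocalEig (x : α) (W : Submodule ℂ (α → ℂ)) (η : ℝ) : Prop :=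
  ∀ w ∈ W, (Γ.Estar x 2 * Γ.Amat 2 * Γ.Estar x 2).mulVec w =
    (η : ℂ) • ((Γ.Estar x 2).mulVec w)

/-- Membership in `U`, the orthogonal complement of `E_2* V_0 + E_2* Y` in `E_2* V`,
where `V_0` is the (unique) irreducible `T`-module with endpoint `0` and `Y` is the
span of the irreducible `T`-modules with endpoint `1`. -/
def memU (x : α) (V0 : Submodule ℂ (α → ℂ)) (v : α → ℂ) : Prop :=
  (Γ.Estar x 2).mulVec v = v ∧
  (∀ w ∈ V0, BDRG.dotp v ((Γ.Estar x 2).mulVec w) = 0) ∧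
  ∀ W : Submodule ℂ (α → ℂ), Γ.IsIrreducibleTModule x W → Γ.HasEndpoint x W 1 →
    ∀ w ∈ W, BDRG.dotp v ((Γ.Estar x 2).mulVec w) = 0

/-- Membership in `U_η = {v ∈ U : E_2* A_2 E_2* v = η v}`. -/
def memUeta (x : α) (V0 : Submodule ℂ (α → ℂ)) (η : ℝ) (v : α → ℂ) : Prop :=
  Γ.memU x V0 v ∧ (Γ.Estar x 2 * Γ.Amat 2 * Γ.Estar x 2).mulVec v = (η : ℂ) • v

/-- The subspace `M v` of the standard module, where `M` is the Bose–Mesner algebra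
(the subalgebra of `Mat_X(ℂ)` generated by the adjacency matrix). -/
def Mspan (v : α → ℂ) : Submodule ℂ (α → ℂ) :=
  Submodule.span ℂ
    {w | ∃ B ∈ Algebra.adjoin ℂ ({Γ.Amat 1} : Set (Matrix α α ℂ)), w = B.mulVec v}

/-- Isomorphism of `T`-modules: a linear bijection `W → W'` commuting with every
element of `T`. -/
def TIso (x : α) (W W' : Submodule ℂ (α → ℂ)) : Prop :=
  ∃ σ : (α → ℂ) →ₗ[ℂ] (α → ℂ), Set.BijOn σ (W : Set (α → ℂ)) (W' : Set (α → ℂ)) ∧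
    ∀ B ∈ Γ.Talg x, ∀ w ∈ W, σ (B.mulVec w) = B.mulVec (σ w)

/-- The scalar `Δ = (k-2)(c_3-1) - (c_2-1) p²₂₂`. -/
def Delta : ℝ := (Γ.k - 2) * (Γ.c 3 - 1) - (Γ.c 2 - 1) * (Γ.p 2 2 2 : ℝ)

/-- `Γ` is taut (with respect to the eigenvalue sequence `θ`): `Δ ≠ 0` and equality
holds in MacLean's fundamental bound. -/
def IsTaut (θ : ℕ → ℝ) : Prop :=
  Γ.Delta ≠ 0 ∧
  Γ.b 3 * (Γ.b 2 * (Γ.k - 2) - (Γ.c 2 - 1) * (θ 1) ^ 2) *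
      (Γ.b 2 * (Γ.k - 2) - (Γ.c 2 - 1) * (θ (Γ.D / 2)) ^ 2) =
    Γ.b 1 * Γ.Delta * ((θ 1) ^ 2 - Γ.b 2) * (Γ.b 2 - (θ (Γ.D / 2)) ^ 2)

/-- `Γ` is spectrally taut with respect to `x`: each local eigenvalue `η_i`
with `k+1 ≤ i ≤ k₂` equals `θ̃_1` or `θ̃_d`. -/
def SpectrallyTaut (x : α) (θ : ℕ → ℝ) : Prop :=
  ∃ η : ℕ → ℝ, Γ.IsLocalEigSeq x η ∧
    ∀ i : ℕ, Γ.p 0 1 1 + 1 ≤ i → i ≤ Γ.p 0 2 2 →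
      η i = Γ.tilde (θ 1) ∨ η i = Γ.tilde (θ (Γ.D / 2))

/-- `Γ` is taut with respect to `x`: every irreducible `T(x)`-module with endpoint 2
is thin with local eigenvalue `θ̃_1` or `θ̃_d`. -/
def TautWrt (x : α) (θ : ℕ → ℝ) : Prop :=
  ∀ W : Submodule ℂ (α → ℂ), Γ.IsIrreducibleTModule x W → Γ.HasEndpoint x W 2 →
    Γ.IsThin x W ∧
      (Γ.HasLocalEig x W (Γ.tilde (θ 1)) ∨ Γ.HasLocalEig x W (Γ.tilde (θ (Γ.D / 2))))

end BDRG

section Aux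

private lemma dist_getVert_le' {V : Type} {G : SimpleGraph V} (hc : G.Connected)
    {x y : V} (p : G.Walk x y) : ∀ m n : ℕ, m ≤ n →
    G.dist (p.getVert m) (p.getVert n) ≤ n - m := by
  induction p with
  | nil =>
    intro m n _
    simp [SimpleGraph.Walk.getVert_of_length_le, SimpleGraph.dist_self]
  | @cons u v w h q ih =>
    intro m n hmn
    match m, n with
    | 0, 0 => simp
    | 0, (n+1) =>
      have h1 : G.dist u v = 1 := SimpleGraph.dist_eq_one_iff_adj.mpr h
      have h2 := ih 0 n (Nat.zero_le n)
      have h3 := hc.dist_triangle (u := u) (v := v) (w := ((q.cons h).getVert (n+1)))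
      simp only [SimpleGraph.Walk.getVert_cons_succ, SimpleGraph.Walk.getVert_zero] at h2 h3 ⊢
      omega
    | (m+1), (n+1) =>
      have := ih m n (by omega)
      simpa [SimpleGraph.Walk.getVert_cons_succ] using this

namespace BDRG

variable {α : Type} [Fintype α] [DecidableEq α] (Γ : BDRG α)

lemma exists_geodesic : ∃ v : ℕ → α, ∀ m n : ℕ, m ≤ n → n ≤ Γ.D →
    Γ.G.dist (v m) (v n) = n - m := by
  obtain ⟨x, y, hxy⟩ := Γ.hdiam
  have hD := Γ.hD
  have hne : Γ.G.dist x y ≠ 0 := by omega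
  obtain ⟨p, hp⟩ := SimpleGraph.exists_walk_of_dist_ne_zero hne
  have hlen : p.length = Γ.D := by rw [hp, hxy]
  refine ⟨fun n => p.getVert n, ?_⟩
  intro m n hmn hn
  have h1 : Γ.G.dist (p.getVert 0) (p.getVert m) ≤ m :=
    (dist_getVert_le' Γ.hconn p 0 m (Nat.zero_le m)).trans (by omega)
  have h2 : Γ.G.dist (p.getVert m) (p.getVert n) ≤ n - m :=
    dist_getVert_le' Γ.hconn p m n hmn
  have h3 : Γ.G.dist (p.getVert n) (p.getVert Γ.D) ≤ Γ.D - n := by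
    have := dist_getVert_le' Γ.hconn p n Γ.D hn
    omega
  have e0 : p.getVert 0 = x := p.getVert_zero
  have eD : p.getVert Γ.D = y := by rw [← hlen]; exact p.getVert_length
  have t1 : Γ.G.dist x y ≤ Γ.G.dist x (p.getVert m) + Γ.G.dist (p.getVert m) y :=
    Γ.hconn.dist_triangle
  have t2 : Γ.G.dist (p.getVert m) y ≤
      Γ.G.dist (p.getVert m) (p.getVert n) + Γ.G.dist (p.getVert n) y :=
    Γ.hconn.dist_triangle
  rw [e0] at h1
  rw [eD] at h3
  show Γ.G.dist (p.getVert m) (p.getVert n) = n - m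
  omega

private lemma ncard_eq {α : Type} [Fintype α] (P : α → Prop) :
    Nat.card {z : α // P z} = (Finset.univ.filter P).card := by
  classical
  rw [Nat.card_eq_fintype_card, Fintype.card_subtype]

lemma p_eq_card {h i j : ℕ} (hh : h ≤ Γ.D) (hi : i ≤ Γ.D) (hj : j ≤ Γ.D)
    {x y : α} (hxy : Γ.G.dist x y = h) :
    Γ.p h i j =
      (Finset.univ.filter (fun z => Γ.G.dist x z = i ∧ Γ.G.dist z y = j)).card := by
  rw [← Γ.hp h i j hh hi hj x y hxy, ncard_eq]
  congr 1
  exact Finset.filter_congr_decidable _ _ _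

end BDRG

end Aux
namespace BDRG

variable {α : Type} [Fintype α] [DecidableEq α] (Γ : BDRG α)

lemma nat_cb {h : ℕ} (h1 : 1 ≤ h) (hhD : h ≤ Γ.D) :
    Γ.p 0 1 1 = Γ.p h 1 (h-1) + (if h = Γ.D then 0 else Γ.p h 1 (h+1)) := by
  obtain ⟨v, hv⟩ := Γ.exists_geodesic
  have hD := Γ.hD
  set x := v 0 with hx
  set y := v h with hy
  have hxy : Γ.G.dist x y = h := by simpa using hv 0 h (by omega) hhD
  have h1D : (1:ℕ) ≤ Γ.D := by omega
  have hA : (Finset.univ.filter (fun z => Γ.G.dist x z = 1)).card = Γ.p 0 1 1 := by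
    rw [Γ.p_eq_card (Nat.zero_le Γ.D) h1D h1D (SimpleGraph.dist_self)]
    congr 1
    apply Finset.filter_congr
    intro z _
    constructor
    · intro hz; exact ⟨hz, by rw [SimpleGraph.dist_comm]; exact hz⟩
    · intro hz; exact hz.1
  set A1 := Finset.univ.filter (fun z => Γ.G.dist x z = 1 ∧ Γ.G.dist z y = h - 1) with hA1
  set A2 := Finset.univ.filter (fun z => Γ.G.dist x z = 1 ∧ Γ.G.dist z y = h) with hA2
  set A3 := Finset.univ.filter (fun z => Γ.G.dist x z = 1 ∧ Γ.G.dist z y = h + 1) with hA3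
  have hsub : Finset.univ.filter (fun z => Γ.G.dist x z = 1) = (A1 ∪ A2) ∪ A3 := by
    ext z
    simp only [hA1, hA2, hA3, Finset.mem_filter, Finset.mem_union, Finset.mem_univ, true_and]
    constructor
    · intro hz
      have t1 : Γ.G.dist z y ≤ Γ.G.dist z x + Γ.G.dist x y := Γ.hconn.dist_triangle
      have t2 : Γ.G.dist x y ≤ Γ.G.dist x z + Γ.G.dist z y := Γ.hconn.dist_triangle
      have hc : Γ.G.dist z x = Γ.G.dist x z := SimpleGraph.dist_comm
      omega
    · rintro ((⟨hz, _⟩ | ⟨hz, _⟩) | ⟨hz, _⟩) <;> exact hz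
  have d12 : Disjoint A1 A2 := by
    rw [Finset.disjoint_left]
    intro z hz1 hz2
    simp only [hA1, hA2, Finset.mem_filter] at hz1 hz2
    omega
  have d3 : Disjoint (A1 ∪ A2) A3 := by
    rw [Finset.disjoint_left]
    intro z hz1 hz2
    simp only [hA1, hA2, hA3, Finset.mem_filter, Finset.mem_union] at hz1 hz2
    omega
  have hcard : Γ.p 0 1 1 = A1.card + A2.card + A3.card := by
    rw [← hA, hsub, Finset.card_union_of_disjoint d3, Finset.card_union_of_disjoint d12]
  have hA1card : A1.card = Γ.p h 1 (h-1) := by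
    rw [Γ.p_eq_card hhD h1D (by omega) hxy]
  have hA2card : A2.card = 0 := by
    have e : Γ.p h 1 h = A2.card := Γ.p_eq_card hhD h1D hhD hxy
    rw [← e]
    exact Γ.hbip h 1 h hhD h1D hhD ⟨h, by ring⟩
  have hA3card : A3.card = (if h = Γ.D then 0 else Γ.p h 1 (h+1)) := by
    by_cases hcase : h = Γ.D
    · rw [if_pos hcase]
      rw [hA3, Finset.card_eq_zero, Finset.filter_eq_empty_iff]
      intro z _
      intro hz
      have hzz := Γ.hdist z y
      have := hz.2
      omega
    · rw [if_neg hcase]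
      rw [Γ.p_eq_card hhD h1D (by omega) hxy]
  omega

lemma nat_kbkc {h : ℕ} (hhD : h + 1 ≤ Γ.D) :
    Γ.p 0 h h * Γ.p h 1 (h+1) = Γ.p 0 (h+1) (h+1) * Γ.p (h+1) 1 h := by
  obtain ⟨v, hv⟩ := Γ.exists_geodesic
  have hD := Γ.hD
  set x := v 0 with hx
  have h1D : (1:ℕ) ≤ Γ.D := by omega
  set S1 := Finset.univ.filter (fun z => Γ.G.dist x z = h) with hS1
  set S2 := Finset.univ.filter (fun w => Γ.G.dist x w = h + 1) with hS2
  have hS1card : S1.card = Γ.p 0 h h := by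
    rw [Γ.p_eq_card (Nat.zero_le Γ.D) (by omega) (by omega) (SimpleGraph.dist_self)]
    congr 1
    apply Finset.filter_congr
    intro z _
    constructor
    · intro hz; exact ⟨hz, by rw [SimpleGraph.dist_comm]; exact hz⟩
    · intro hz; exact hz.1
  have hS2card : S2.card = Γ.p 0 (h+1) (h+1) := by
    rw [Γ.p_eq_card (Nat.zero_le Γ.D) hhD hhD (SimpleGraph.dist_self)]
    congr 1
    apply Finset.filter_congr
    intro z _
    constructor
    · intro hz; exact ⟨hz, by rw [SimpleGraph.dist_comm]; exact hz⟩
    · intro hz; exact hz.1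
  have key1 : ∀ z ∈ S1, (∑ w ∈ S2, (if Γ.G.dist z w = 1 then 1 else 0)) = Γ.p h 1 (h+1) := by
    intro z hz
    simp only [hS1, Finset.mem_filter] at hz
    have hzx : Γ.G.dist z x = h := by rw [SimpleGraph.dist_comm]; exact hz.2
    rw [← Finset.card_filter, hS2, Finset.filter_filter]
    rw [Γ.p_eq_card (by omega) h1D hhD hzx]
    congr 1
    apply Finset.filter_congr
    intro w _
    constructor
    · intro hw; exact ⟨hw.2, by rw [SimpleGraph.dist_comm]; exact hw.1⟩
    · intro hw; exact ⟨by rw [SimpleGraph.dist_comm]; exact hw.2, hw.1⟩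
  have key2 : ∀ w ∈ S2, (∑ z ∈ S1, (if Γ.G.dist z w = 1 then 1 else 0)) = Γ.p (h+1) 1 h := by
    intro w hw
    simp only [hS2, Finset.mem_filter] at hw
    have hwx : Γ.G.dist w x = h + 1 := by rw [SimpleGraph.dist_comm]; exact hw.2
    have : (∑ z ∈ S1, (if Γ.G.dist z w = 1 then 1 else 0))
        = (∑ z ∈ S1, (if Γ.G.dist w z = 1 then 1 else 0)) := by
      apply Finset.sum_congr rfl
      intro z _
      rw [SimpleGraph.dist_comm]
    rw [this, ← Finset.card_filter, hS1, Finset.filter_filter]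
    rw [Γ.p_eq_card hhD h1D (by omega) hwx]
    congr 1
    apply Finset.filter_congr
    intro z _
    constructor
    · intro hzz; exact ⟨hzz.2, by rw [SimpleGraph.dist_comm]; exact hzz.1⟩
    · intro hzz; exact ⟨by rw [SimpleGraph.dist_comm]; exact hzz.2, hzz.1⟩
  have hdouble : (∑ z ∈ S1, ∑ w ∈ S2, (if Γ.G.dist z w = 1 then 1 else 0))
      = (∑ w ∈ S2, ∑ z ∈ S1, (if Γ.G.dist z w = 1 then 1 else 0)) := Finset.sum_comm
  calc Γ.p 0 h h * Γ.p h 1 (h+1) = ∑ z ∈ S1, Γ.p h 1 (h+1) := by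
        rw [Finset.sum_const, hS1card, smul_eq_mul]
    _ = ∑ z ∈ S1, ∑ w ∈ S2, (if Γ.G.dist z w = 1 then 1 else 0) :=
        (Finset.sum_congr rfl key1).symm
    _ = ∑ w ∈ S2, ∑ z ∈ S1, (if Γ.G.dist z w = 1 then 1 else 0) := hdouble
    _ = ∑ w ∈ S2, Γ.p (h+1) 1 h := Finset.sum_congr rfl key2
    _ = Γ.p 0 (h+1) (h+1) * Γ.p (h+1) 1 h := by
        rw [Finset.sum_const, hS2card, smul_eq_mul]

lemma nat_c1 : Γ.p 1 1 0 = 1 := by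
  obtain ⟨v, hv⟩ := Γ.exists_geodesic
  have hD := Γ.hD
  have hxy : Γ.G.dist (v 0) (v 1) = 1 := by simpa using hv 0 1 (by omega) (by omega)
  rw [Γ.p_eq_card (by omega) (by omega) (Nat.zero_le Γ.D) hxy]
  rw [show (Finset.univ.filter (fun z => Γ.G.dist (v 0) z = 1 ∧ Γ.G.dist z (v 1) = 0)) = {v 1} by
    ext z
    simp only [Finset.mem_filter, Finset.mem_univ, true_and, Finset.mem_singleton]
    constructor
    · intro hz
      exact Γ.hconn.dist_eq_zero_iff.mp hz.2
    · intro hz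
      subst hz
      exact ⟨hxy, SimpleGraph.dist_self⟩]
  simp

lemma nat_c_pos {h : ℕ} (h1 : 1 ≤ h) (hhD : h ≤ Γ.D) : 0 < Γ.p h 1 (h-1) := by
  obtain ⟨v, hv⟩ := Γ.exists_geodesic
  have hxy : Γ.G.dist (v 0) (v h) = h := by simpa using hv 0 h (by omega) hhD
  rw [Γ.p_eq_card hhD (by omega) (by omega) hxy]
  apply Finset.card_pos.mpr
  refine ⟨v 1, ?_⟩
  simp only [Finset.mem_filter, Finset.mem_univ, true_and]
  constructor
  · simpa using hv 0 1 (by omega) (by omega)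
  · have := hv 1 h h1 hhD
    simpa using this

lemma nat_b_pos {h : ℕ} (hhD : h + 1 ≤ Γ.D) : 0 < Γ.p h 1 (h+1) := by
  obtain ⟨v, hv⟩ := Γ.exists_geodesic
  have hxy : Γ.G.dist (v 1) (v (h+1)) = h := by simpa using hv 1 (h+1) (by omega) hhD
  rw [Γ.p_eq_card (by omega) (by omega) hhD hxy]
  apply Finset.card_pos.mpr
  refine ⟨v 0, ?_⟩
  simp only [Finset.mem_filter, Finset.mem_univ, true_and]
  constructor
  · rw [SimpleGraph.dist_comm]
    simpa using hv 0 1 (by omega) (by omega)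
  · simpa using hv 0 (h+1) (by omega) hhD

lemma nat_kv_pos {h : ℕ} (hhD : h ≤ Γ.D) : 0 < Γ.p 0 h h := by
  obtain ⟨v, hv⟩ := Γ.exists_geodesic
  rw [Γ.p_eq_card (Nat.zero_le Γ.D) hhD hhD (SimpleGraph.dist_self (v := v 0))]
  apply Finset.card_pos.mpr
  refine ⟨v h, ?_⟩
  simp only [Finset.mem_filter, Finset.mem_univ, true_and]
  have h1 : Γ.G.dist (v 0) (v h) = h := by simpa using hv 0 h (by omega) hhD
  exact ⟨h1, by rw [SimpleGraph.dist_comm]; exact h1⟩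

/-! Real versions -/

lemma k_eq : Γ.k = (Γ.p 0 1 1 : ℝ) := by
  have hD := Γ.hD
  rw [k, b, if_neg (by omega)]

lemma c_one : Γ.c 1 = 1 := by
  rw [c, if_neg (by omega), nat_c1]
  norm_num

lemma c_pos {h : ℕ} (h1 : 1 ≤ h) (hhD : h ≤ Γ.D) : 0 < Γ.c h := by
  rw [c, if_neg (by omega)]
  exact_mod_cast Γ.nat_c_pos h1 hhD

lemma b_pos {h : ℕ} (hhD : h + 1 ≤ Γ.D) : 0 < Γ.b h := by
  rw [b, if_neg (by omega)]
  exact_mod_cast Γ.nat_b_pos hhD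

lemma kv_pos {h : ℕ} (hhD : h ≤ Γ.D) : 0 < Γ.kv h := by
  rw [kv]
  exact_mod_cast Γ.nat_kv_pos hhD

lemma cb {h : ℕ} (h1 : 1 ≤ h) (hhD : h ≤ Γ.D) : Γ.c h + Γ.b h = Γ.k := by
  have h0 := Γ.nat_cb h1 hhD
  rw [Γ.k_eq, c, if_neg (by omega), b]
  by_cases hcase : h = Γ.D
  · rw [if_pos hcase]
    rw [if_pos hcase] at h0
    norm_cast
    omega
  · rw [if_neg hcase]
    rw [if_neg hcase] at h0
    norm_cast
    omega

lemma kbkc {h : ℕ} (hhD : h + 1 ≤ Γ.D) :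
    Γ.kv h * Γ.b h = Γ.kv (h+1) * Γ.c (h+1) := by
  have := Γ.nat_kbkc hhD
  rw [kv, kv, b, if_neg (by omega), c, if_neg (by omega)]
  exact_mod_cast congrArg (fun n : ℕ => (n : ℝ)) this

end BDRG
namespace BDRG

variable {α : Type} [Fintype α] [DecidableEq α] (Γ : BDRG α)

lemma f_zero : Γ.f 0 = 1 := rfl

lemma f_one : Γ.f 1 = Polynomial.X := by rw [f]

lemma f_step (n : ℕ) : Γ.f (n+2) = Polynomial.C (Γ.c (n+2))⁻¹ *
    (Polynomial.X * Γ.f (n+1) - Polynomial.C (Γ.b n) * Γ.f n) := by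
  rw [f]

lemma f_eval (n : ℕ) (t : ℝ) : (Γ.f (n+2)).eval t =
    (Γ.c (n+2))⁻¹ * (t * (Γ.f (n+1)).eval t - Γ.b n * (Γ.f n).eval t) := by
  rw [f_step]; simp

lemma pp_zero : Γ.pp 0 = 1 := by
  simp [pp, f_zero]

lemma pp_one : Γ.pp 1 = Polynomial.X := by
  rw [pp]
  rw [Finset.sum_range_succ, Finset.sum_range_succ, Finset.sum_range_zero]
  norm_num [f_one]

lemma pp_step (n : ℕ) : Γ.pp (n+2) = Γ.pp n + Γ.f (n+2) := by
  rw [pp, pp]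
  rw [Finset.sum_range_succ, Finset.sum_range_succ]
  have h1 : (n + 2 - (n+1)) % 2 = 1 := by omega
  have h2 : (n + 2 - (n+2)) % 2 = 0 := by omega
  rw [if_neg (by omega), if_pos h2, add_zero]
  congr 1
  apply Finset.sum_congr rfl
  intro h hh
  simp only [Finset.mem_range] at hh
  have : (n + 2 - h) % 2 = (n - h) % 2 := by omega
  rw [this]

lemma pp_eval_step (n : ℕ) (t : ℝ) :
    (Γ.pp (n+2)).eval t = (Γ.pp n).eval t + (Γ.f (n+2)).eval t := by
  rw [pp_step]; simp

lemma R1 : ∀ j : ℕ, 1 ≤ j → j ≤ Γ.D - 1 → ∀ t : ℝ,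
    t * (Γ.pp j).eval t =
      Γ.c (j+1) * (Γ.pp (j+1)).eval t + Γ.b (j+1) * (Γ.pp (j-1)).eval t := by
  have hD := Γ.hD
  intro j
  induction j using Nat.strong_induction_on with
  | _ j ih =>
    match j with
    | 0 => intro h1 _ _; exact absurd h1 (by omega)
    | 1 =>
      intro _ _ t
      have hc2 : Γ.c 2 ≠ 0 := ne_of_gt (Γ.c_pos (by omega) (by omega))
      have hcb2 : Γ.c 2 + Γ.b 2 = Γ.k := Γ.cb (by omega) (by omega)
      have e2 := Γ.f_eval 0 t
      rw [f_one, f_zero] at e2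
      simp only [Polynomial.eval_X, Polynomial.eval_one, mul_one] at e2
      show t * (Γ.pp 1).eval t = Γ.c 2 * (Γ.pp 2).eval t + Γ.b 2 * (Γ.pp 0).eval t
      rw [Γ.pp_eval_step 0 t, pp_zero, pp_one]
      simp only [Polynomial.eval_X, Polynomial.eval_one]
      have hk : Γ.k = Γ.b 0 := rfl
      field_simp at e2 ⊢
      nlinarith [e2, hcb2]
    | 2 =>
      intro _ _ t
      have hc2 : Γ.c 2 ≠ 0 := ne_of_gt (Γ.c_pos (by omega) (by omega))
      have hc3 : Γ.c 3 ≠ 0 := ne_of_gt (Γ.c_pos (by omega) (by omega))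
      have hcb1 : Γ.c 1 + Γ.b 1 = Γ.k := Γ.cb (by omega) (by omega)
      have hcb3 : Γ.c 3 + Γ.b 3 = Γ.k := Γ.cb (by omega) (by omega)
      have hc1 : Γ.c 1 = 1 := Γ.c_one
      have e3 := Γ.f_eval 1 t
      rw [f_one] at e3
      simp only [Polynomial.eval_X] at e3
      show t * (Γ.pp 2).eval t = Γ.c 3 * (Γ.pp 3).eval t + Γ.b 3 * (Γ.pp 1).eval t
      rw [Γ.pp_eval_step 0 t, Γ.pp_eval_step 1 t, pp_zero, pp_one]
      simp only [Polynomial.eval_X, Polynomial.eval_one]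
      norm_num at e3
      have hinv3 : Γ.c 3 * (Γ.c 3)⁻¹ = 1 := mul_inv_cancel₀ hc3
      linear_combination (-(Γ.c 3)) * e3 +
        (-(t * (Γ.f 2).eval t - Γ.b 1 * t)) * hinv3 + (-t) * hcb3 + t * hcb1 + (-t) * hc1
    | (n+3) =>
      intro _ hjD t
      have IH := ih (n+1) (by omega) (by omega) (by omega) t
      have hc4 : Γ.c (n+4) ≠ 0 := ne_of_gt (Γ.c_pos (by omega) (by omega))
      have hcb2 : Γ.c (n+2) + Γ.b (n+2) = Γ.k := Γ.cb (by omega) (by omega)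
      have hcb4 : Γ.c (n+4) + Γ.b (n+4) = Γ.k := Γ.cb (by omega) (by omega)
      have e4 := Γ.f_eval (n+2) t
      have hstep0 := Γ.pp_eval_step n t
      show t * (Γ.pp (n+3)).eval t =
        Γ.c (n+4) * (Γ.pp (n+4)).eval t + Γ.b (n+4) * (Γ.pp (n+2)).eval t
      rw [Γ.pp_eval_step (n+1) t, Γ.pp_eval_step (n+2) t, e4]
      simp only [Nat.add_sub_cancel] at IH
      have hinv : Γ.c (n+4) * (Γ.c (n+4))⁻¹ = 1 := mul_inv_cancel₀ hc4
      linear_combination IH - Γ.b (n+2) * hstep0 + ((Γ.pp (n+2)).eval t) * hcb2 -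
        ((Γ.pp (n+2)).eval t) * hcb4 -
        (t * (Γ.f (n+3)).eval t - Γ.b (n+2) * (Γ.f (n+2)).eval t) * hinv

end BDRG
namespace BDRG

variable {α : Type} [Fintype α] [DecidableEq α] (Γ : BDRG α)

lemma Psi_zero (hW : Γ.kv 0 * Γ.b 0 * Γ.b 1 ≠ 0) (lam mu : ℝ) : Γ.Psi 0 lam mu = 1 := by
  rw [Psi, Finset.sum_range_one, if_pos (by omega), pp_zero]
  simp only [Polynomial.eval_one, one_mul]
  exact div_self hW

lemma Psi_one (hW : Γ.kv 1 * Γ.b 1 * Γ.b 2 ≠ 0) (lam mu : ℝ) :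
    Γ.Psi 1 lam mu = lam * mu := by
  rw [Psi, Finset.sum_range_succ, Finset.sum_range_one,
    if_neg (show ¬((1 - 0) % 2 = 0) by omega),
    if_pos (show (1 - 1) % 2 = 0 by omega), pp_one]
  simp only [Polynomial.eval_X, zero_add]
  rw [mul_div_assoc, div_self hW, mul_one]

lemma Psi_step (i : ℕ)
    (hc1 : Γ.c (i+1) ≠ 0) (hc2 : Γ.c (i+2) ≠ 0)
    (hE : Γ.kv i * Γ.b i * Γ.b (i+1) = Γ.kv (i+2) * (Γ.c (i+1) * Γ.c (i+2)))
    (hW : Γ.kv (i+2) * Γ.b (i+2) * Γ.b (i+2+1) ≠ 0) (lam mu : ℝ) :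
    Γ.Psi (i+2) lam mu = (Γ.pp (i+2)).eval lam * (Γ.pp (i+2)).eval mu +
      (Γ.b (i+2) * Γ.b (i+3) / (Γ.c (i+1) * Γ.c (i+2))) * Γ.Psi i lam mu := by
  rw [Psi, Finset.sum_range_succ, Finset.sum_range_succ,
    if_neg (show ¬((i + 2 - (i + 1)) % 2 = 0) by omega),
    if_pos (show (i + 2 - (i + 2)) % 2 = 0 by omega), add_zero]
  have hww : (Γ.pp (i+2)).eval lam * (Γ.pp (i+2)).eval mu *
      (Γ.kv (i+2) * Γ.b (i+2) * Γ.b (i+2+1)) / (Γ.kv (i+2) * Γ.b (i+2) * Γ.b (i+2+1))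
      = (Γ.pp (i+2)).eval lam * (Γ.pp (i+2)).eval mu := mul_div_cancel_right₀ _ hW
  rw [hww]
  have hS : (∑ h ∈ Finset.range (i+1), if (i + 2 - h) % 2 = 0 then
      (Γ.pp h).eval lam * (Γ.pp h).eval mu *
        (Γ.kv (i+2) * Γ.b (i+2) * Γ.b (i+2+1)) / (Γ.kv h * Γ.b h * Γ.b (h+1))
      else 0) = (Γ.b (i+2) * Γ.b (i+3) / (Γ.c (i+1) * Γ.c (i+2))) * Γ.Psi i lam mu := by
    rw [Psi, Finset.mul_sum]
    apply Finset.sum_congr rfl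
    intro h hh
    simp only [Finset.mem_range] at hh
    have hcond : (i + 2 - h) % 2 = (i - h) % 2 := by omega
    rw [hcond]
    by_cases hcase : (i - h) % 2 = 0
    · rw [if_pos hcase, if_pos hcase]
      have key : Γ.kv (i+2) * Γ.b (i+2) * Γ.b (i+2+1) =
          (Γ.b (i+2) * Γ.b (i+3) / (Γ.c (i+1) * Γ.c (i+2))) *
            (Γ.kv i * Γ.b i * Γ.b (i+1)) := by
        rw [hE]
        field_simp
      rw [key]
      ring
    · rw [if_neg hcase, if_neg hcase, mul_zero]
  rw [hS, add_comm]

lemma E_chain (i : ℕ) (hiD : i + 2 ≤ Γ.D) :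
    Γ.kv i * Γ.b i * Γ.b (i+1) = Γ.kv (i+2) * (Γ.c (i+1) * Γ.c (i+2)) := by
  have h1 := Γ.kbkc (show i + 1 ≤ Γ.D by omega)
  have h2 := Γ.kbkc (show (i+1) + 1 ≤ Γ.D by omega)
  have e : i + 1 + 1 = i + 2 := rfl
  rw [e] at h2
  linear_combination Γ.b (i+1) * h1 + Γ.c (i+1) * h2

lemma E2' (hc2 : Γ.c 2 ≠ 0) (t : ℝ) :
    Γ.c 2 * (Γ.f 2).eval t = t * t - Γ.b 0 := by
  rw [Γ.f_eval 0 t, f_one, f_zero]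
  simp only [Polynomial.eval_X, Polynomial.eval_one, mul_one]
  field_simp

lemma E3' (hc3 : Γ.c 3 ≠ 0) (t : ℝ) :
    Γ.c 3 * (Γ.f 3).eval t = t * (Γ.f 2).eval t - Γ.b 1 * t := by
  rw [show (3:ℕ) = 1 + 2 from rfl, Γ.f_eval 1 t, f_one]
  simp only [Polynomial.eval_X]
  field_simp

end BDRG
/-- a variation of the Christoffel–Darboux formula. -/
theorem statement_3 {α : Type} [Fintype α] [DecidableEq α] (Γ : BDRG α) :
    ∀ i : ℕ, 1 ≤ i → i ≤ Γ.D - 1 → ∀ lam mu : ℝ,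
      (Γ.pp (i + 1)).eval lam * (Γ.pp (i - 1)).eval mu -
          (Γ.pp (i - 1)).eval lam * (Γ.pp (i + 1)).eval mu =
        (Γ.c i)⁻¹ * (Γ.c (i + 1))⁻¹ * (lam ^ 2 - mu ^ 2) * Γ.Psi (i - 1) lam mu := by
  have hD := Γ.hD
  intro i
  induction i using Nat.strong_induction_on with
  | _ i ih =>
    match i with
    | 0 => intro h1 _ _ _; exact absurd h1 (by omega)
    | 1 =>
      intro _ _ lam mu
      have hc1 := Γ.c_one
      have hc2 : Γ.c 2 ≠ 0 := ne_of_gt (Γ.c_pos (by omega) (by omega))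
      have hW0 : Γ.kv 0 * Γ.b 0 * Γ.b 1 ≠ 0 := by
        have h1 := Γ.kv_pos (show 0 ≤ Γ.D by omega)
        have h2 := Γ.b_pos (show 0 + 1 ≤ Γ.D by omega)
        have h3 := Γ.b_pos (show 1 + 1 ≤ Γ.D by omega)
        exact ne_of_gt (mul_pos (mul_pos h1 h2) h3)
      show (Γ.pp 2).eval lam * (Γ.pp 0).eval mu - (Γ.pp 0).eval lam * (Γ.pp 2).eval mu
        = (Γ.c 1)⁻¹ * (Γ.c 2)⁻¹ * (lam ^ 2 - mu ^ 2) * Γ.Psi 0 lam mu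
      rw [Γ.Psi_zero hW0, hc1, Γ.pp_eval_step 0 lam, Γ.pp_eval_step 0 mu, Γ.pp_zero]
      simp only [Polynomial.eval_one, inv_one, one_mul, mul_one]
      have e2l := Γ.E2' hc2 lam
      have e2m := Γ.E2' hc2 mu
      field_simp
      linear_combination e2l - e2m
    | 2 =>
      intro _ _ lam mu
      have hc2 : Γ.c 2 ≠ 0 := ne_of_gt (Γ.c_pos (by omega) (by omega))
      have hc3 : Γ.c 3 ≠ 0 := ne_of_gt (Γ.c_pos (by omega) (by omega))
      have hW1 : Γ.kv 1 * Γ.b 1 * Γ.b 2 ≠ 0 := by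
        have h1 := Γ.kv_pos (show 1 ≤ Γ.D by omega)
        have h2 := Γ.b_pos (show 1 + 1 ≤ Γ.D by omega)
        have h3 := Γ.b_pos (show 2 + 1 ≤ Γ.D by omega)
        exact ne_of_gt (mul_pos (mul_pos h1 h2) h3)
      show (Γ.pp 3).eval lam * (Γ.pp 1).eval mu - (Γ.pp 1).eval lam * (Γ.pp 3).eval mu
        = (Γ.c 2)⁻¹ * (Γ.c 3)⁻¹ * (lam ^ 2 - mu ^ 2) * Γ.Psi 1 lam mu
      rw [Γ.Psi_one hW1, Γ.pp_eval_step 1 lam, Γ.pp_eval_step 1 mu, Γ.pp_one]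
      simp only [Polynomial.eval_X]
      have e3l := Γ.E3' hc3 lam
      have e3m := Γ.E3' hc3 mu
      have e2l := Γ.E2' hc2 lam
      have e2m := Γ.E2' hc2 mu
      field_simp
      linear_combination mu * Γ.c 2 * e3l - lam * Γ.c 2 * e3m +
        lam * mu * e2l - lam * mu * e2m
    | (m+3) =>
      intro _ hiD lam mu
      have IH := ih (m+1) (by omega) (by omega) (by omega) lam mu
      simp only [show m+3-1 = m+2 from rfl, show m+3+1 = m+4 from rfl]
      simp only [show m+1+1 = m+2 from rfl, show m+1-1 = m from rfl] at IH
      have hc1 : Γ.c (m+1) ≠ 0 := ne_of_gt (Γ.c_pos (by omega) (by omega))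
      have hc2 : Γ.c (m+2) ≠ 0 := ne_of_gt (Γ.c_pos (by omega) (by omega))
      have hc3 : Γ.c (m+3) ≠ 0 := ne_of_gt (Γ.c_pos (by omega) (by omega))
      have hc4 : Γ.c (m+4) ≠ 0 := ne_of_gt (Γ.c_pos (by omega) (by omega))
      have hW : Γ.kv (m+2) * Γ.b (m+2) * Γ.b (m+2+1) ≠ 0 := by
        have h1 := Γ.kv_pos (show m + 2 ≤ Γ.D by omega)
        have h2 := Γ.b_pos (show (m+2) + 1 ≤ Γ.D by omega)
        have h3 := Γ.b_pos (show (m+3) + 1 ≤ Γ.D by omega)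
        exact ne_of_gt (mul_pos (mul_pos h1 h2) h3)
      have hE := Γ.E_chain m (by omega)
      have hPsi := Γ.Psi_step m hc1 hc2 hE hW lam mu
      -- three-term recurrences
      have R1a := Γ.R1 (m+1) (by omega) (by omega)
      have R1b := Γ.R1 (m+2) (by omega) (by omega)
      have R1c := Γ.R1 (m+3) (by omega) (by omega)
      simp only [show m+1+1 = m+2 from rfl, show m+2+1 = m+3 from rfl,
        show m+3+1 = m+4 from rfl, show m+2-1 = m+1 from rfl,
        show m+3-1 = m+2 from rfl, show m+1-1 = m from rfl] at R1a R1b R1c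
      have T : ∀ t : ℝ, Γ.c (m+3) * Γ.c (m+4) * (Γ.pp (m+4)).eval t =
          t^2 * (Γ.pp (m+2)).eval t -
            (Γ.c (m+3) * Γ.b (m+4) + Γ.b (m+3) * Γ.c (m+2)) * (Γ.pp (m+2)).eval t -
            Γ.b (m+3) * Γ.b (m+2) * (Γ.pp m).eval t := by
        intro t
        have h1 := R1a t
        have h2 := R1b t
        have h3 := R1c t
        linear_combination (-t) * h2 - Γ.c (m+3) * h3 - Γ.b (m+3) * h1
      have hcc : Γ.c (m+1) * Γ.c (m+2) ≠ 0 := mul_ne_zero hc1 hc2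
      have cIH : (lam^2 - mu^2) * Γ.Psi m lam mu =
          Γ.c (m+1) * Γ.c (m+2) *
            ((Γ.pp (m+2)).eval lam * (Γ.pp m).eval mu -
              (Γ.pp m).eval lam * (Γ.pp (m+2)).eval mu) := by
        rw [IH]
        field_simp
      have hrr : (lam^2 - mu^2) *
          (Γ.b (m+2) * Γ.b (m+3) / (Γ.c (m+1) * Γ.c (m+2)) * Γ.Psi m lam mu) =
          Γ.b (m+2) * Γ.b (m+3) *
            ((Γ.pp (m+2)).eval lam * (Γ.pp m).eval mu -
              (Γ.pp m).eval lam * (Γ.pp (m+2)).eval mu) := by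
        field_simp
        linear_combination Γ.b (m+2) * Γ.b (m+3) * cIH
      have main : Γ.c (m+3) * Γ.c (m+4) *
          ((Γ.pp (m+4)).eval lam * (Γ.pp (m+2)).eval mu -
            (Γ.pp (m+2)).eval lam * (Γ.pp (m+4)).eval mu) =
          (lam^2 - mu^2) * Γ.Psi (m+2) lam mu := by
        rw [hPsi, mul_add, hrr]
        have Tl := T lam
        have Tm := T mu
        linear_combination (Γ.pp (m+2)).eval mu * Tl - (Γ.pp (m+2)).eval lam * Tm
      field_simp
      linear_combination main
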